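/- Let x be a solution of an instance of G*_ε with f(x) ≥ ∑_{i=1}^{s} p_i + (1/(s+1))·∑_{i=s+1}^{n} p_i. Then x is not a local optimum, and the fuller machine of x contains at least (n−s)/(s+1) small jobs. -/

import Mathlib

/-- The load of machine `b` under assignment `x` (job `i` is on machine `x i`). -/
noncomputable def load {n : ℕ} (p : Fin n → ℝ) (x : Fin n → Bool) (b : Bool) : ℝ :=
  ∑ i ∈ Finset.univ.filter (fun i => x i = b), p i

/-- The makespan of a solution `x` of the Partition instance with processing times `p`. -/
noncomputable def makespan {n : ℕ} (p : Fin n → ℝ) (x : Fin n → Bool) : ℝ :=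
  max (load p x false) (load p x true)

/-- `x` is a local optimum: no solution at Hamming distance 1 has strictly smaller makespan. -/
def IsLocalOpt {n : ℕ} (p : Fin n → ℝ) (x : Fin n → Bool) : Prop :=
  ∀ j : Fin n, ¬ makespan p (Function.update x j (!x j)) < makespan p x

/-- The processing times of the generalised worst-case instance class `G*_ε`
with `n` jobs and `s` large jobs (indices `0,…,s-1` are the large jobs). -/
noncomputable def gProc (n s : ℕ) (ε : ℝ) : Fin n → ℝ := fun i =>
  if (i : ℕ) < s then 1 / (2 * (s : ℝ) - 1) - ε / (2 * s)
  else (((s : ℝ) - 1) / ((n : ℝ) - s)) * (1 / (2 * (s : ℝ) - 1) + ε / (2 * ((s : ℝ) - 1)))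

/-!
Write `a` and `c` for the sizes of the large and small jobs of `G*_ε` and `Q = (n - s) c` for
the total size of the small jobs. The only numerical fact about `G*_ε` that matters is
`Q < (s + 1) a`, i.e. `Q / (s + 1) < a`. Let `T = s a + Q / (s + 1)` be the threshold.

The fuller machine holds at most `s` large jobs, so its small jobs weigh at least `Q / (s + 1)`.
It also holds a large job, since otherwise its load would be at most `Q < T`. Moving that job
to the other machine brings the fuller one down by `a > 0` and the other one up to at most
`s a + Q - T + a`, which is below `T` because `(s - 1) Q / (s + 1) < (s - 1) a`.
-/

open Finset

lemma load_update {n : ℕ} (p : Fin n → ℝ) (x : Fin n → Bool) (j : Fin n) (c b : Bool) :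
    load p (Function.update x j c) b
      = load p x b + (if c = b then p j else 0) - (if x j = b then p j else 0) := by
  have hfun : (fun i => if Function.update x j c i = b then p i else 0)
      = Function.update (fun i => if x i = b then p i else 0) j (if c = b then p j else 0) := by
    funext i
    rcases eq_or_ne i j with rfl | h
    · simp
    · simp [Function.update_of_ne h]
  simp only [load, sum_filter]
  rw [hfun, sum_update_of_mem (mem_univ j), sum_sdiff_eq_sub (subset_univ _), sum_singleton]
  ring

lemma load_add_load_not {n : ℕ} (p : Fin n → ℝ) (x : Fin n → Bool) (b : Bool) :
    load p x b + load p x (!b) = ∑ i, p i := by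
  rw [load, load, ← sum_filter_add_sum_filter_not univ (fun i => x i = b)]
  congr 2
  ext i
  cases x i <;> cases b <;> simp

lemma load_le_makespan {n : ℕ} (p : Fin n → ℝ) (x : Fin n → Bool) (b : Bool) :
    load p x b ≤ makespan p x := by
  cases b
  exacts [le_max_left _ _, le_max_right _ _]

lemma exists_load_eq_makespan {n : ℕ} (p : Fin n → ℝ) (x : Fin n → Bool) :
    ∃ b, load p x b = makespan p x := by
  rcases le_total (load p x false) (load p x true) with h | h
  exacts [⟨true, (max_eq_right h).symm⟩, ⟨false, (max_eq_left h).symm⟩]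

lemma makespan_lt_iff {n : ℕ} (p : Fin n → ℝ) (x : Fin n → Bool) (t : ℝ) :
    makespan p x < t ↔ ∀ b, load p x b < t := by
  simp [makespan, Bool.forall_bool]

theorem not_isLocalOpt_of_load_add_lt {n : ℕ} {p : Fin n → ℝ} {x : Fin n → Bool} {j : Fin n}
    (hj : 0 < p j) (hlt : load p x (!x j) + p j < load p x (x j)) : ¬ IsLocalOpt p x := by
  have hmax := load_le_makespan p x (x j)
  intro hopt
  apply hopt j
  rw [makespan_lt_iff, Bool.forall_bool' (x j), load_update, load_update]
  constructor
  · simp only [Bool.not_eq_eq_eq_not, Bool.eq_not_self, ↓reduceIte, add_zero]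
    linarith
  · simp only [↓reduceIte, Bool.eq_not_self, sub_zero]
    linarith

def largeJobsOn {n : ℕ} (s : ℕ) (x : Fin n → Bool) (b : Bool) : Finset (Fin n) :=
  univ.filter fun i => x i = b ∧ (i : ℕ) < s

def smallJobsOn {n : ℕ} (s : ℕ) (x : Fin n → Bool) (b : Bool) : Finset (Fin n) :=
  univ.filter fun i => x i = b ∧ s ≤ (i : ℕ)

def IsTwoSized {n : ℕ} (p : Fin n → ℝ) (s : ℕ) (a c : ℝ) : Prop :=
  ∀ i, p i = if (i : ℕ) < s then a else c

lemma card_filter_val_lt_of_le {n s : ℕ} (h : s ≤ n) : #{i : Fin n | (i : ℕ) < s} = s := by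
  rw [Fin.card_filter_val_lt, min_eq_right h]

lemma card_filter_le_val {n s : ℕ} (h : s ≤ n) : #{i : Fin n | s ≤ (i : ℕ)} = n - s := by
  have := card_filter_add_card_filter_not (s := (univ : Finset (Fin n))) (fun i => (i : ℕ) < s)
  simp only [not_lt, card_univ, Fintype.card_fin, card_filter_val_lt_of_le h] at this
  omega

lemma card_largeJobsOn_le {n : ℕ} (s : ℕ) (x : Fin n → Bool) (b : Bool) :
    #(largeJobsOn s x b) ≤ s := by
  calc #(largeJobsOn s x b) ≤ #{i : Fin n | (i : ℕ) < s} :=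
        card_le_card fun i hi => by simp_all [largeJobsOn]
    _ = min n s := Fin.card_filter_val_lt
    _ ≤ s := min_le_right n s

lemma card_smallJobsOn_le {n s : ℕ} (h : s ≤ n) (x : Fin n → Bool) (b : Bool) :
    #(smallJobsOn s x b) ≤ n - s := by
  rw [← card_filter_le_val h]
  exact card_le_card fun i hi => by simp_all [smallJobsOn]

namespace IsTwoSized

variable {n s : ℕ} {a c : ℝ} {p : Fin n → ℝ}

lemma of_lt (hp : IsTwoSized p s a c) {i : Fin n} (hi : (i : ℕ) < s) : p i = a := by
  rw [hp i, if_pos hi]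

lemma of_le (hp : IsTwoSized p s a c) {i : Fin n} (hi : s ≤ (i : ℕ)) : p i = c := by
  rw [hp i, if_neg hi.not_gt]

lemma load_eq (hp : IsTwoSized p s a c) (x : Fin n → Bool) (b : Bool) :
    load p x b = #(largeJobsOn s x b) * a + #(smallJobsOn s x b) * c := by
  rw [load, ← sum_filter_add_sum_filter_not _ (fun i : Fin n => (i : ℕ) < s)]
  simp only [filter_filter, not_lt]
  rw [sum_congr rfl fun i hi => hp.of_lt (mem_filter.1 hi).2.2,
    sum_congr rfl fun i hi => hp.of_le (mem_filter.1 hi).2.2, sum_const, sum_const,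
    nsmul_eq_mul, nsmul_eq_mul]
  rfl

lemma sum_filter_val_lt (hp : IsTwoSized p s a c) (h : s ≤ n) :
    ∑ i ∈ {i : Fin n | (i : ℕ) < s}, p i = s * a := by
  rw [sum_congr rfl fun i hi => hp.of_lt (mem_filter.1 hi).2, sum_const,
    card_filter_val_lt_of_le h, nsmul_eq_mul]

lemma sum_filter_le_val (hp : IsTwoSized p s a c) (h : s ≤ n) :
    ∑ i ∈ {i : Fin n | s ≤ (i : ℕ)}, p i = (n - s) * c := by
  rw [sum_congr rfl fun i hi => hp.of_le (mem_filter.1 hi).2, sum_const,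
    card_filter_le_val h, nsmul_eq_mul, Nat.cast_sub h]

lemma sum_eq (hp : IsTwoSized p s a c) (h : s ≤ n) : ∑ i, p i = s * a + (n - s) * c := by
  rw [← sum_filter_add_sum_filter_not univ (fun i : Fin n => (i : ℕ) < s)]
  simp only [not_lt]
  rw [hp.sum_filter_val_lt h, hp.sum_filter_le_val h]

lemma le_card_smallJobsOn (hp : IsTwoSized p s a c) (ha : 0 ≤ a) (hc : 0 < c)
    {x : Fin n → Bool} {b : Bool} (hload : s * a + (n - s) * c / (s + 1) ≤ load p x b) :
    ((n : ℝ) - s) / (s + 1) ≤ #(smallJobsOn s x b) := by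
  have hlarge : (#(largeJobsOn s x b) : ℝ) * a ≤ s * a :=
    mul_le_mul_of_nonneg_right (by exact_mod_cast card_largeJobsOn_le s x b) ha
  rw [hp.load_eq] at hload
  refine le_of_mul_le_mul_right ?_ hc
  rw [div_mul_eq_mul_div]
  linarith

lemma largeJobsOn_nonempty (hp : IsTwoSized p s a c) (hs : 0 < s) (hsn : s ≤ n) (hc : 0 ≤ c)
    (hkey : (n - s) * c < (s + 1) * a) {x : Fin n → Bool} {b : Bool}
    (hload : s * a + (n - s) * c / (s + 1) ≤ load p x b) : (largeJobsOn s x b).Nonempty := by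
  rw [nonempty_iff_ne_empty]
  intro hempty
  have hsmall : (#(smallJobsOn s x b) : ℝ) * c ≤ (n - s) * c := by
    refine mul_le_mul_of_nonneg_right ?_ hc
    rw [← Nat.cast_sub hsn]
    exact_mod_cast card_smallJobsOn_le hsn x b
  have hs' : (0 : ℝ) < s := Nat.cast_pos.2 hs
  have hkey' : (n - s) * c / (s + 1) < a := (div_lt_iff₀' (by positivity)).2 hkey
  have hsplit : (n - s) * c = (s + 1) * ((n - s) * c / (s + 1)) := by field_simp
  rw [hp.load_eq, hempty, card_empty, Nat.cast_zero, zero_mul, zero_add] at hload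
  linarith [mul_lt_mul_of_pos_left hkey' hs']

theorem not_isLocalOpt (hp : IsTwoSized p s a c) (hs : 1 < s) (hsn : s ≤ n) (hc : 0 ≤ c)
    (hkey : (n - s) * c < (s + 1) * a) {x : Fin n → Bool}
    (hx : s * a + (n - s) * c / (s + 1) ≤ makespan p x) : ¬ IsLocalOpt p x := by
  obtain ⟨b, hb⟩ := exists_load_eq_makespan p x
  obtain ⟨j, hj⟩ := hp.largeJobsOn_nonempty (by omega) hsn hc hkey (hb ▸ hx)
  obtain ⟨hjb, hjs⟩ : x j = b ∧ (j : ℕ) < s := (mem_filter.1 hj).2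
  have hs' : (0 : ℝ) < s - 1 := by
    rw [sub_pos]
    exact_mod_cast hs
  have hns : (0 : ℝ) ≤ n - s := sub_nonneg.2 (by exact_mod_cast hsn)
  have hkey' : (n - s) * c / (s + 1) < a := (div_lt_iff₀' (by positivity)).2 hkey
  have hsplit : (n - s) * c = (s + 1) * ((n - s) * c / (s + 1)) := by field_simp
  have hother := load_add_load_not p x b
  rw [hp.sum_eq hsn] at hother
  refine not_isLocalOpt_of_load_add_lt (j := j) ?_ ?_ <;> rw [hp.of_lt hjs]
  · nlinarith [mul_nonneg hns hc]
  · rw [hjb]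
    linarith [mul_lt_mul_of_pos_left hkey' hs']

end IsTwoSized

section GStar

variable {n s : ℕ} {ε : ℝ}

noncomputable def gLarge (s : ℕ) (ε : ℝ) : ℝ := 1 / (2 * (s : ℝ) - 1) - ε / (2 * s)

noncomputable def gSmall (n s : ℕ) (ε : ℝ) : ℝ :=
  (((s : ℝ) - 1) / ((n : ℝ) - s)) * (1 / (2 * (s : ℝ) - 1) + ε / (2 * ((s : ℝ) - 1)))

lemma isTwoSized_gProc (n s : ℕ) (ε : ℝ) :
    IsTwoSized (gProc n s ε) s (gLarge s ε) (gSmall n s ε) :=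
  fun _ => rfl

lemma gLarge_pos (hs : 1 ≤ s) (hε0 : 0 ≤ ε) (hε1 : ε < 1 / (2 * (s : ℝ) - 1)) :
    0 < gLarge s ε := by
  have hs' : (1 : ℝ) ≤ s := by exact_mod_cast hs
  have : ε / (2 * s) ≤ ε := div_le_self hε0 (by linarith)
  unfold gLarge
  linarith

lemma gSmall_pos (hs : 2 ≤ s) (hsn : s < n) (hε0 : 0 ≤ ε) : 0 < gSmall n s ε := by
  have hs' : (2 : ℝ) ≤ s := by exact_mod_cast hs
  have hsn' : (s : ℝ) < n := by exact_mod_cast hsn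
  unfold gSmall
  have : 0 ≤ ε / (2 * ((s : ℝ) - 1)) := div_nonneg hε0 (by linarith)
  have : 0 < 1 / (2 * (s : ℝ) - 1) := one_div_pos.2 (by linarith)
  exact mul_pos (div_pos (by linarith) (by linarith)) (by linarith)

lemma sub_mul_gSmall (hs : 2 ≤ s) (hsn : s < n) :
    ((n : ℝ) - s) * gSmall n s ε = (s - 1) / (2 * s - 1) + ε / 2 := by
  have hs' : (2 : ℝ) ≤ s := by exact_mod_cast hs
  have hsn' : (s : ℝ) < n := by exact_mod_cast hsn
  have h1 : (s : ℝ) - 1 ≠ 0 := by linarith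
  have h2 : (n : ℝ) - s ≠ 0 := by linarith
  have h3 : 2 * (s : ℝ) - 1 ≠ 0 := by linarith
  unfold gSmall
  field_simp

lemma sub_mul_gSmall_lt (hs : 2 ≤ s) (hsn : s < n) (hε1 : ε < 1 / (2 * (s : ℝ) - 1)) :
    ((n : ℝ) - s) * gSmall n s ε < (s + 1) * gLarge s ε := by
  have hs' : (2 : ℝ) ≤ s := by exact_mod_cast hs
  have hden : (0 : ℝ) < 2 * s - 1 := by linarith
  have hgap : (s + 1) * gLarge s ε - ((s - 1) / (2 * s - 1) + ε / 2)
      = 2 / (2 * s - 1) - ε * (2 * s + 1) / (2 * s) := by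
    have : 2 * (s : ℝ) - 1 ≠ 0 := hden.ne'
    unfold gLarge
    field_simp
    ring
  have hnum : (2 * s - 1) * (ε * (2 * s + 1)) < 2 * (2 * s) := by
    rw [lt_div_iff₀ hden] at hε1
    nlinarith
  rw [sub_mul_gSmall hs hsn, ← sub_pos, hgap, div_sub_div _ _ hden.ne' (by positivity)]
  exact div_pos (by linarith) (by positivity)

end GStar

theorem high_makespan_not_localOpt_general
    (n s : ℕ) (ε : ℝ) (h2s : 2 ≤ s) (hsn : s < n)
    (hε0 : 0 < ε) (hε1 : ε < 1 / (2 * (s : ℝ) - 1))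
    (x : Fin n → Bool)
    (hx : makespan (gProc n s ε) x ≥
        (∑ i ∈ Finset.univ.filter (fun i : Fin n => (i : ℕ) < s), gProc n s ε i)
        + (1 / ((s : ℝ) + 1))
            * ∑ i ∈ Finset.univ.filter (fun i : Fin n => s ≤ (i : ℕ)), gProc n s ε i) :
    ¬ IsLocalOpt (gProc n s ε) x ∧
    ∀ b : Bool, load (gProc n s ε) x b = makespan (gProc n s ε) x →
      ((n : ℝ) - s) / ((s : ℝ) + 1)
        ≤ ((Finset.univ.filter (fun i : Fin n => x i = b ∧ s ≤ (i : ℕ))).card : ℝ) := by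
  have hp := isTwoSized_gProc n s ε
  have hsmall := gSmall_pos h2s hsn hε0.le
  have hlarge := gLarge_pos (by omega) hε0.le hε1
  have hthreshold :
      s * gLarge s ε + (n - s) * gSmall n s ε / (s + 1) ≤ makespan (gProc n s ε) x := by
    rwa [hp.sum_filter_val_lt hsn.le, hp.sum_filter_le_val hsn.le, one_div_mul_eq_div] at hx
  refine ⟨hp.not_isLocalOpt h2s hsn.le hsmall.le (sub_mul_gSmall_lt h2s hsn hε1) hthreshold,
    fun b hb => hp.le_card_smallJobsOn hlarge.le hsmall (hb ▸ hthreshold)⟩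

theorem high_makespan_not_localOpt
    (n s : ℕ) (ε : ℝ) (hn : Even n) (hs : Even s) (h2s : 2 ≤ s) (hsn : s < n)
    (hε0 : 0 < ε) (hε1 : ε < 1 / (2 * (s : ℝ) - 1))
    (x : Fin n → Bool)
    (hx : makespan (gProc n s ε) x ≥
        (∑ i ∈ Finset.univ.filter (fun i : Fin n => (i : ℕ) < s), gProc n s ε i)
        + (1 / ((s : ℝ) + 1))
            * ∑ i ∈ Finset.univ.filter (fun i : Fin n => s ≤ (i : ℕ)), gProc n s ε i) :
    ¬ IsLocalOpt (gProc n s ε) x ∧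
    ∀ b : Bool, load (gProc n s ε) x b = makespan (gProc n s ε) x →
      ((n : ℝ) - s) / ((s : ℝ) + 1)
        ≤ ((Finset.univ.filter (fun i : Fin n => x i = b ∧ s ≤ (i : ℕ))).card : ℝ) :=
  high_makespan_not_localOpt_general n s ε h2s hsn hε0 hε1 x hx
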